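/- Let Z be a standard Gaussian random variable and c > 0, τ > 0. Then E[e(τZ; c)] = (τ²/2) + cτ φ(c/τ) − (c² + τ²) Q(c/τ), where φ is the standard normal density and Q(x) = ∫ₓ^∞ φ(t)dt. -/

import Mathlib

open MeasureTheory ProbabilityTheory Real

/-- The Huber-type function `e(a; c)` from the paper (eq. (soft_cost)). -/
noncomputable def huberE (a c : ℝ) : ℝ :=
  if a > c then c * a - c ^ 2 / 2
  else if a < -c then -c * a - c ^ 2 / 2
  else a ^ 2 / 2

/-- Standard normal density `φ`. -/
noncomputable def stdGaussPDF (x : ℝ) : ℝ := (Real.sqrt (2 * π))⁻¹ * Real.exp (-x ^ 2 / 2)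

/-- Gaussian tail function `Q(x) = ∫ₓ^∞ φ(t) dt`. -/
noncomputable def gaussQ (x : ℝ) : ℝ := ∫ t in Set.Ioi x, stdGaussPDF t

open Set Filter

lemma phi_eq (x : ℝ) : stdGaussPDF x = (Real.sqrt (2 * π))⁻¹ * Real.exp (-(1/2) * x ^ 2) := by
  rw [stdGaussPDF]; ring_nf

lemma phi_even (x : ℝ) : stdGaussPDF (-x) = stdGaussPDF x := by simp [stdGaussPDF]

lemma continuous_phi : Continuous stdGaussPDF := by
  unfold stdGaussPDF
  fun_prop

lemma integrable_phi : Integrable stdGaussPDF := by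
  rw [show stdGaussPDF = fun x => (Real.sqrt (2 * π))⁻¹ * Real.exp (-(1/2) * x ^ 2)
    from funext phi_eq]
  exact (integrable_exp_neg_mul_sq (by norm_num : (0:ℝ) < 1/2)).const_mul _

lemma integrable_mul_phi : Integrable (fun x => x * stdGaussPDF x) := by
  simp_rw [phi_eq, show ∀ x : ℝ, x * ((Real.sqrt (2*π))⁻¹ * Real.exp (-(1/2) * x ^ 2))
      = (Real.sqrt (2*π))⁻¹ * (x * Real.exp (-(1/2) * x ^ 2)) from fun x => by ring]
  exact (integrable_mul_exp_neg_mul_sq (by norm_num : (0:ℝ) < 1/2)).const_mul _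

lemma integrable_sq_phi : Integrable (fun x => x ^ 2 * stdGaussPDF x) := by
  have h := integrable_rpow_mul_exp_neg_mul_sq (by norm_num : (0:ℝ) < 1/2)
    (by norm_num : (-1:ℝ) < 2)
  have h2 : ∀ x : ℝ, x ^ (2:ℝ) = x ^ 2 := fun x => by
    rw [show (2:ℝ) = ((2:ℕ):ℝ) by norm_num, Real.rpow_natCast]
  simp_rw [h2] at h
  simp_rw [phi_eq, show ∀ x : ℝ, x ^ 2 * ((Real.sqrt (2*π))⁻¹ * Real.exp (-(1/2) * x ^ 2))
      = (Real.sqrt (2*π))⁻¹ * (x ^ 2 * Real.exp (-(1/2) * x ^ 2)) from fun x => by ring]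
  exact h.const_mul _

lemma hasDerivAt_phi (x : ℝ) :
    HasDerivAt stdGaussPDF (-(x * stdGaussPDF x)) x := by
  have h : HasDerivAt (fun y : ℝ => -y ^ 2 / 2) (-x) x := by
    have h0 := ((hasDerivAt_pow 2 x).neg).div_const 2
    exact h0.congr_deriv (by push_cast; ring)
  have h2 := (h.exp).const_mul ((Real.sqrt (2 * π))⁻¹)
  have hfun : (fun y => (Real.sqrt (2 * π))⁻¹ * Real.exp (-y ^ 2 / 2)) = stdGaussPDF := by
    funext y; rw [stdGaussPDF]
  rw [hfun] at h2
  exact h2.congr_deriv (by rw [stdGaussPDF]; ring)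

lemma hasDerivAt_neg_phi (x : ℝ) :
    HasDerivAt (fun y => -stdGaussPDF y) (x * stdGaussPDF x) x := by
  exact (hasDerivAt_phi x).neg.congr_deriv (by ring)

lemma hasDerivAt_neg_mul_phi (x : ℝ) :
    HasDerivAt (fun y => -(y * stdGaussPDF y))
      (x ^ 2 * stdGaussPDF x - stdGaussPDF x) x := by
  have h1 : HasDerivAt (fun y => y * stdGaussPDF y)
      (stdGaussPDF x + x * (-(x * stdGaussPDF x))) x := by
    exact ((hasDerivAt_id' x).mul (hasDerivAt_phi x)).congr_deriv (by ring)
  have := h1.neg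
  exact this.congr_deriv (by ring)

lemma tendsto_phi_atTop : Tendsto stdGaussPDF atTop (nhds 0) := by
  rw [show stdGaussPDF = fun x => (Real.sqrt (2 * π))⁻¹ * Real.exp (-(1/2) * x ^ 2)
    from funext phi_eq]
  rw [show (0:ℝ) = (Real.sqrt (2*π))⁻¹ * 0 by ring]
  apply Tendsto.const_mul
  apply Real.tendsto_exp_atBot.comp
  apply Tendsto.const_mul_atTop_of_neg (by norm_num : -(1/2 : ℝ) < 0)
  simpa using tendsto_pow_atTop (two_ne_zero)

lemma tendsto_mul_phi_atTop : Tendsto (fun x => x * stdGaussPDF x) atTop (nhds 0) := by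
  have h := (tendsto_rpow_abs_mul_exp_neg_mul_sq_cocompact
    (by norm_num : (0:ℝ) < 1/2) 1).mono_left _root_.atTop_le_cocompact
  have h2 := h.const_mul ((Real.sqrt (2*π))⁻¹)
  rw [mul_zero] at h2
  apply h2.congr'
  filter_upwards [eventually_gt_atTop (0:ℝ)] with x hx
  rw [phi_eq, Real.rpow_one, abs_of_pos hx]; ring

lemma integral_Ioi_mul_phi (b : ℝ) :
    ∫ x in Ioi b, x * stdGaussPDF x = stdGaussPDF b := by
  have h0 : Tendsto (fun y => -stdGaussPDF y) atTop (nhds 0) := by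
    simpa using tendsto_phi_atTop.neg
  have := integral_Ioi_of_hasDerivAt_of_tendsto (a := b)
    (continuous_phi.neg.continuousWithinAt)
    (fun x _ => hasDerivAt_neg_phi x)
    (integrable_mul_phi.integrableOn) h0
  simpa using this

lemma integral_Ioi_sq_phi (b : ℝ) :
    ∫ x in Ioi b, x ^ 2 * stdGaussPDF x = b * stdGaussPDF b + gaussQ b := by
  have h0 : Tendsto (fun y => -(y * stdGaussPDF y)) atTop (nhds 0) := by
    simpa using tendsto_mul_phi_atTop.neg
  have hcont : ContinuousWithinAt (fun y => -(y * stdGaussPDF y)) (Ici b) b :=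
    ((continuous_id.mul continuous_phi).neg).continuousWithinAt
  have h := integral_Ioi_of_hasDerivAt_of_tendsto (a := b) hcont
    (fun x _ => hasDerivAt_neg_mul_phi x)
    ((integrable_sq_phi.sub integrable_phi).integrableOn) h0
  have hsub : ∫ x in Ioi b, (x ^ 2 * stdGaussPDF x - stdGaussPDF x)
      = (∫ x in Ioi b, x ^ 2 * stdGaussPDF x) - ∫ x in Ioi b, stdGaussPDF x :=
    integral_sub integrable_sq_phi.integrableOn integrable_phi.integrableOn
  rw [hsub] at h
  have : (∫ x in Ioi b, x ^ 2 * stdGaussPDF x) - gaussQ b = b * stdGaussPDF b := by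
    rw [gaussQ]; linarith [h]
  linarith [this]

lemma integral_Iic_phi (b : ℝ) :
    ∫ x in Iic (-b), stdGaussPDF x = gaussQ b := by
  rw [← integral_comp_neg_Ioi b stdGaussPDF]
  simp_rw [phi_even]
  rfl

lemma integral_Iic_mul_phi (b : ℝ) :
    ∫ x in Iic (-b), x * stdGaussPDF x = -stdGaussPDF b := by
  rw [← integral_comp_neg_Ioi b (fun x => x * stdGaussPDF x)]
  simp_rw [phi_even, neg_mul]
  rw [integral_neg, integral_Ioi_mul_phi]

lemma integral_Iic_sq_phi (b : ℝ) :
    ∫ x in Iic (-b), x ^ 2 * stdGaussPDF x = b * stdGaussPDF b + gaussQ b := by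
  rw [← integral_comp_neg_Ioi b (fun x => x ^ 2 * stdGaussPDF x)]
  simp_rw [phi_even, neg_sq]
  exact integral_Ioi_sq_phi b

lemma phi_eq_gaussianPDFReal : stdGaussPDF = gaussianPDFReal 0 (1 : NNReal) := by
  funext x
  simp [stdGaussPDF, gaussianPDFReal]

lemma integral_phi_total : ∫ x, stdGaussPDF x = 1 := by
  rw [phi_eq_gaussianPDFReal]
  exact integral_gaussianPDFReal_eq_one 0 one_ne_zero

lemma gaussQ_zero : gaussQ 0 = 1 / 2 := by
  have h := intervalIntegral.integral_Iic_add_Ioi (b := (0:ℝ)) (f := stdGaussPDF)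
    integrable_phi.integrableOn integrable_phi.integrableOn
  rw [integral_phi_total] at h
  have h2 : ∫ x in Iic (0:ℝ), stdGaussPDF x = gaussQ 0 := by
    rw [show (0:ℝ) = -0 by norm_num, integral_Iic_phi, neg_zero]
  rw [h2, gaussQ] at h
  rw [gaussQ]; linarith

lemma integral_sq_phi_total : ∫ x, x ^ 2 * stdGaussPDF x = 1 := by
  have h := intervalIntegral.integral_Iic_add_Ioi (b := (0:ℝ)) (f := fun x => x ^ 2 * stdGaussPDF x)
    integrable_sq_phi.integrableOn integrable_sq_phi.integrableOn
  have h2 : ∫ x in Iic (0:ℝ), x ^ 2 * stdGaussPDF x = gaussQ 0 := by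
    rw [show (0:ℝ) = -0 by norm_num, integral_Iic_sq_phi, neg_zero]; ring
  rw [h2, integral_Ioi_sq_phi, gaussQ_zero] at h
  rw [← h]; ring

lemma phi_nonneg (x : ℝ) : 0 ≤ stdGaussPDF x := by
  rw [stdGaussPDF]; positivity

lemma integral_gaussianReal_density (g : ℝ → ℝ) :
    ∫ z, g z ∂(gaussianReal 0 1) = ∫ z, g z * stdGaussPDF z := by
  rw [gaussianReal_of_var_ne_zero 0 one_ne_zero]
  have hmeas : Measurable fun x => (stdGaussPDF x).toNNReal :=
    continuous_phi.measurable.real_toNNReal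
  have hpdf : gaussianPDF 0 1 = fun x => ((stdGaussPDF x).toNNReal : ENNReal) := by
    funext x
    rw [gaussianPDF, ← phi_eq_gaussianPDFReal]
    rfl
  rw [hpdf, integral_withDensity_eq_integral_smul hmeas]
  congr 1; funext x
  rw [NNReal.smul_def, smul_eq_mul, Real.coe_toNNReal _ (phi_nonneg x), mul_comm]

/-- For standard Gaussian `Z`, `c, τ > 0`:
`E[e(τZ; c)] = τ²/2 + cτ φ(c/τ) − (c² + τ²) Q(c/τ)`. -/
theorem expectation_huber_gaussian (c τ : ℝ) (hc : 0 < c) (hτ : 0 < τ) :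
    ∫ z, huberE (τ * z) c ∂(gaussianReal 0 1) =
      τ ^ 2 / 2 + c * τ * stdGaussPDF (c / τ) - (c ^ 2 + τ ^ 2) * gaussQ (c / τ) := by
  set b : ℝ := c / τ with hb_def
  have hb : 0 < b := div_pos hc hτ
  have hτb : τ * b = c := by rw [hb_def]; field_simp
  -- pointwise branch identities
  have hlow : ∀ z ∈ Iic (-b), huberE (τ * z) c * stdGaussPDF z
      = (-c * (τ * z) - c ^ 2 / 2) * stdGaussPDF z := by
    intro z hz
    rcases eq_or_lt_of_le (mem_Iic.mp hz) with h | h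
    · have hz' : τ * z = -c := by rw [h, mul_neg, hτb]
      rw [huberE, if_neg (by rw [hz']; linarith), if_neg (by rw [hz']; linarith), hz']
      ring
    · have hz' : τ * z < -c := by
        have := (mul_lt_mul_iff_right₀ hτ).mpr h
        rw [mul_neg, hτb] at this; linarith
      rw [huberE, if_neg (by linarith), if_pos hz']
  have hmid : ∀ z ∈ Ioc (-b) b, huberE (τ * z) c * stdGaussPDF z
      = (τ ^ 2 * z ^ 2 / 2) * stdGaussPDF z := by
    intro z hz
    obtain ⟨h1, h2⟩ := hz
    have ha1 : -c < τ * z := by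
      have := (mul_lt_mul_iff_right₀ hτ).mpr h1
      rw [mul_neg, hτb] at this; linarith
    have ha2 : τ * z ≤ c := by
      have := (mul_le_mul_iff_right₀ hτ).mpr h2
      rw [hτb] at this; linarith
    rw [huberE, if_neg (by linarith), if_neg (by linarith)]
    ring_nf
  have hhigh : ∀ z ∈ Ioi b, huberE (τ * z) c * stdGaussPDF z
      = (c * (τ * z) - c ^ 2 / 2) * stdGaussPDF z := by
    intro z hz
    have ha : c < τ * z := by
      have := (mul_lt_mul_iff_right₀ hτ).mpr (mem_Ioi.mp hz)
      rw [hτb] at this; linarith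
    rw [huberE, if_pos ha]
  -- integrability of the explicit branch functions
  have h1int : Integrable (fun z => (-c * (τ * z) - c ^ 2 / 2) * stdGaussPDF z) := by
    have h := (integrable_mul_phi.const_mul (-(c * τ))).sub
      (integrable_phi.const_mul (c ^ 2 / 2))
    exact h.congr (Filter.Eventually.of_forall fun z => by
      simp only [Pi.sub_apply]; ring)
  have h2int : Integrable (fun z => (τ ^ 2 * z ^ 2 / 2) * stdGaussPDF z) := by
    have h := integrable_sq_phi.const_mul (τ ^ 2 / 2)
    exact h.congr (Filter.Eventually.of_forall fun z => by simp only []; ring)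
  have h3int : Integrable (fun z => (c * (τ * z) - c ^ 2 / 2) * stdGaussPDF z) := by
    have h := (integrable_mul_phi.const_mul (c * τ)).sub
      (integrable_phi.const_mul (c ^ 2 / 2))
    exact h.congr (Filter.Eventually.of_forall fun z => by
      simp only [Pi.sub_apply]; ring)
  -- integrability of huberE * φ on each piece
  have hOn1 : IntegrableOn (fun z => huberE (τ * z) c * stdGaussPDF z) (Iic (-b)) :=
    h1int.integrableOn.congr_fun (fun z hz => (hlow z hz).symm) measurableSet_Iic
  have hOn2 : IntegrableOn (fun z => huberE (τ * z) c * stdGaussPDF z) (Ioc (-b) b) :=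
    h2int.integrableOn.congr_fun (fun z hz => (hmid z hz).symm) measurableSet_Ioc
  have hOn3 : IntegrableOn (fun z => huberE (τ * z) c * stdGaussPDF z) (Ioi b) :=
    h3int.integrableOn.congr_fun (fun z hz => (hhigh z hz).symm) measurableSet_Ioi
  have hOnIic : IntegrableOn (fun z => huberE (τ * z) c * stdGaussPDF z) (Iic b) := by
    rw [← Iic_union_Ioc_eq_Iic (by linarith : -b ≤ b)]
    exact hOn1.union hOn2
  -- splitting
  rw [integral_gaussianReal_density]
  rw [← intervalIntegral.integral_Iic_add_Ioi hOnIic hOn3]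
  have hsplit : ∫ z in Iic b, huberE (τ * z) c * stdGaussPDF z
      = (∫ z in Iic (-b), huberE (τ * z) c * stdGaussPDF z)
        + ∫ z in Ioc (-b) b, huberE (τ * z) c * stdGaussPDF z := by
    rw [← setIntegral_union (Iic_disjoint_Ioc le_rfl) measurableSet_Ioc hOn1 hOn2,
      Iic_union_Ioc_eq_Iic (by linarith : -b ≤ b)]
  rw [hsplit]
  -- evaluate each piece
  have e1 : ∫ z in Iic (-b), huberE (τ * z) c * stdGaussPDF z
      = c * τ * stdGaussPDF b - c ^ 2 / 2 * gaussQ b := by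
    rw [setIntegral_congr_fun measurableSet_Iic hlow]
    have : ∫ z in Iic (-b), (-c * (τ * z) - c ^ 2 / 2) * stdGaussPDF z
        = (-(c * τ)) * (∫ z in Iic (-b), z * stdGaussPDF z)
          - (c ^ 2 / 2) * ∫ z in Iic (-b), stdGaussPDF z := by
      rw [← integral_const_mul, ← integral_const_mul,
        ← integral_sub ((integrable_mul_phi.const_mul _).integrableOn)
          ((integrable_phi.const_mul _).integrableOn)]
      congr 1; funext z; ring
    rw [this, integral_Iic_mul_phi, integral_Iic_phi]
    ring
  have e3 : ∫ z in Ioi b, huberE (τ * z) c * stdGaussPDF z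
      = c * τ * stdGaussPDF b - c ^ 2 / 2 * gaussQ b := by
    rw [setIntegral_congr_fun measurableSet_Ioi hhigh]
    have : ∫ z in Ioi b, (c * (τ * z) - c ^ 2 / 2) * stdGaussPDF z
        = (c * τ) * (∫ z in Ioi b, z * stdGaussPDF z)
          - (c ^ 2 / 2) * ∫ z in Ioi b, stdGaussPDF z := by
      rw [← integral_const_mul, ← integral_const_mul,
        ← integral_sub ((integrable_mul_phi.const_mul _).integrableOn)
          ((integrable_phi.const_mul _).integrableOn)]
      congr 1; funext z; ring
    rw [this, integral_Ioi_mul_phi]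
    rw [show ∫ z in Ioi b, stdGaussPDF z = gaussQ b from rfl]
  have hIicb_sq : ∫ z in Iic b, z ^ 2 * stdGaussPDF z
      = 1 - (b * stdGaussPDF b + gaussQ b) := by
    have h := intervalIntegral.integral_Iic_add_Ioi (b := b)
      (f := fun z => z ^ 2 * stdGaussPDF z)
      integrable_sq_phi.integrableOn integrable_sq_phi.integrableOn
    rw [integral_Ioi_sq_phi, integral_sq_phi_total] at h
    linarith
  have hIoc_sq : ∫ z in Ioc (-b) b, z ^ 2 * stdGaussPDF z
      = 1 - 2 * (b * stdGaussPDF b + gaussQ b) := by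
    have h : ∫ z in Iic b, z ^ 2 * stdGaussPDF z
        = (∫ z in Iic (-b), z ^ 2 * stdGaussPDF z)
          + ∫ z in Ioc (-b) b, z ^ 2 * stdGaussPDF z := by
      rw [← setIntegral_union (Iic_disjoint_Ioc le_rfl) measurableSet_Ioc
        integrable_sq_phi.integrableOn integrable_sq_phi.integrableOn,
        Iic_union_Ioc_eq_Iic (by linarith : -b ≤ b)]
    rw [hIicb_sq, integral_Iic_sq_phi] at h
    linarith
  have e2 : ∫ z in Ioc (-b) b, huberE (τ * z) c * stdGaussPDF z
      = τ ^ 2 / 2 * (1 - 2 * (b * stdGaussPDF b + gaussQ b)) := by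
    rw [setIntegral_congr_fun measurableSet_Ioc hmid]
    have : ∫ z in Ioc (-b) b, (τ ^ 2 * z ^ 2 / 2) * stdGaussPDF z
        = (τ ^ 2 / 2) * ∫ z in Ioc (-b) b, z ^ 2 * stdGaussPDF z := by
      rw [← integral_const_mul]
      congr 1; funext z; ring
    rw [this, hIoc_sq]
  rw [e1, e2, e3]
  have hbb : τ ^ 2 * b = c * τ := by
    rw [sq, mul_assoc, hτb]; exact mul_comm τ c
  linear_combination (-(stdGaussPDF b)) * hbb
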